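/- arXiv:1412.4539 — 5 statements merged into one kernel-verified Lean document; each statement's English description precedes it below -/
import Mathlib

section
/- Let W : ℝ → (ℂⁿ →L[ℂ] ℂⁿ) be the Cauchy operator of z' = A(t)z, i.e. W'(t) = A(t) ∘ W(t) and W(0) = id, where A : ℝ → (ℂⁿ →L[ℂ] ℂⁿ) is continuous. Then for every t₀ ≥ 0, every eigenvalue ρ of W(t₀) satisfies exp(−N(t₀)) ≤ |ρ| ≤ exp(N(t₀)), where N(t₀) = ∫₀^{t₀} ‖A(s)‖ ds. -/
/-!
Along a solution `x t = W t v` of `x' = A(t) x` we have `‖x'‖ ≤ ‖A‖ ‖x‖`, so a Gronwall estimate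
with variable coefficient bounds `‖x t₀‖` by `‖x 0‖ exp N(t₀)`, and the same estimate run backwards
in time bounds `‖x 0‖` by `‖x t₀‖ exp N(t₀)`. For an eigenvector `v` of `W t₀` with eigenvalue `ρ`
these read `|ρ| ≤ exp N(t₀)` and `1 ≤ |ρ| exp N(t₀)`.
-/

open Filter Topology Real

section Gronwall

variable {E : Type*} [NormedAddCommGroup E] [NormedSpace ℝ E]

theorem norm_le_mul_exp_integral_of_norm_deriv_le {f f' : ℝ → E} {k : ℝ → ℝ}
    (hk : Continuous k) (hf : ∀ t, HasDerivAt f (f' t) t) (bound : ∀ t, ‖f' t‖ ≤ k t * ‖f t‖)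
    {a b : ℝ} (hab : a ≤ b) :
    ‖f b‖ ≤ ‖f a‖ * exp (∫ s in a..b, k s) := by
  set I : ℝ → ℝ := fun t => ∫ s in a..t, k s
  have hI : ∀ t, HasDerivAt I (k t) t := fun t => (hk.integral_hasStrictDerivAt a t).hasDerivAt
  -- The strict inequality required by the fencing theorem is obtained from the slack `ε`.
  have fence : ∀ ε > 0, ‖f b‖ ≤ (‖f a‖ + ε) * exp (I b + ε * (b - a)) := by
    intro ε hε
    set B : ℝ → ℝ := fun t => (‖f a‖ + ε) * exp (I t + ε * (t - a))
    have hB : ∀ t, HasDerivAt B ((k t + ε) * B t) t := by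
      intro t
      have := (((hI t).add (((hasDerivAt_id t).sub_const a).const_mul ε)).exp).const_mul
        (‖f a‖ + ε)
      refine this.congr_deriv ?_
      simp only [B, Pi.add_apply, id, mul_one]
      ring
    have hB_pos : ∀ t, 0 < B t := fun t => by positivity
    refine image_norm_le_of_norm_deriv_right_lt_deriv_boundary
      (fun t _ => (hf t).continuousAt.continuousWithinAt) (fun t _ => (hf t).hasDerivWithinAt)
      ?_ hB ?_ ⟨hab, le_rfl⟩
    · simp [B, I, hε.le]
    · intro t _ hfB
      calc ‖f' t‖ ≤ k t * ‖f t‖ := bound t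
        _ = k t * B t := by rw [hfB]
        _ < (k t + ε) * B t := mul_lt_mul_of_pos_right (lt_add_of_pos_right _ hε) (hB_pos t)
  have hlim : Tendsto (fun ε => (‖f a‖ + ε) * exp (I b + ε * (b - a))) (𝓝[>] 0)
      (𝓝 (‖f a‖ * exp (I b))) := by
    have hcont : Continuous fun ε => (‖f a‖ + ε) * exp (I b + ε * (b - a)) := by fun_prop
    simpa using (hcont.tendsto 0).mono_left nhdsWithin_le_nhds
  exact ge_of_tendsto hlim (eventually_nhdsWithin_of_forall fence)

theorem norm_le_mul_exp_integral_of_norm_deriv_le_backward {f f' : ℝ → E} {k : ℝ → ℝ}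
    (hk : Continuous k) (hf : ∀ t, HasDerivAt f (f' t) t) (bound : ∀ t, ‖f' t‖ ≤ k t * ‖f t‖)
    {a b : ℝ} (hab : a ≤ b) :
    ‖f a‖ ≤ ‖f b‖ * exp (∫ s in a..b, k s) := by
  have hf_neg : ∀ t, HasDerivAt (fun t => f (-t)) (-f' (-t)) t := fun t => by
    simpa [Function.comp_def] using (hf (-t)).scomp t (hasDerivAt_neg t)
  simpa [intervalIntegral.integral_comp_neg] using
    norm_le_mul_exp_integral_of_norm_deriv_le (hk.comp continuous_neg) hf_neg
      (fun t => by simpa using bound (-t)) (neg_le_neg hab)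

end Gronwall

theorem abs_eigenvalue_cauchy_bounds_general
    {E : Type*} [NormedAddCommGroup E] [NormedSpace ℂ E]
    (A : ℝ → E →L[ℂ] E) (hA : Continuous A)
    (W : ℝ → E →L[ℂ] E)
    (hW : ∀ t, HasDerivAt W ((A t).comp (W t)) t)
    (hW0 : W 0 = ContinuousLinearMap.id ℂ E)
    (t₀ : ℝ) (ht₀ : 0 ≤ t₀)
    (ρ : ℂ) (v : E) (hv : v ≠ 0) (hρ : W t₀ v = ρ • v) :
    Real.exp (-∫ s in (0:ℝ)..t₀, ‖A s‖) ≤ ‖ρ‖ ∧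
      ‖ρ‖ ≤ Real.exp (∫ s in (0:ℝ)..t₀, ‖A s‖) := by
  have hx : ∀ t, HasDerivAt (fun t => W t v) (A t (W t v)) t := fun t => by
    simpa [Function.comp_def] using ((ContinuousLinearMap.apply ℂ E v).restrictScalars ℝ).hasFDerivAt.comp_hasDerivAt t
      (hW t)
  have hbound : ∀ t, ‖A t (W t v)‖ ≤ ‖A t‖ * ‖W t v‖ := fun t => (A t).le_opNorm _
  have hupper := norm_le_mul_exp_integral_of_norm_deriv_le hA.norm hx hbound ht₀
  have hlower := norm_le_mul_exp_integral_of_norm_deriv_le_backward hA.norm hx hbound ht₀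
  simp only [hW0, hρ, ContinuousLinearMap.id_apply, norm_smul] at hupper hlower
  have hv_pos : 0 < ‖v‖ := norm_pos_iff.2 hv
  constructor
  · rw [Real.exp_neg, inv_le_iff_one_le_mul₀ (exp_pos _)]
    exact le_of_mul_le_mul_left (by linarith) hv_pos
  · exact le_of_mul_le_mul_right (by rwa [mul_comm ‖v‖] at hupper) hv_pos

/-- consequence of Theorem 1 of the paper. Let `W` be the Cauchy operator of
`z' = A(t) z` (`W' = A(t) ∘ W`, `W 0 = id`) on `ℂⁿ` (a space `E` linearly identified with
`Fin n → ℂ`, carrying an arbitrary norm). Then for every `t₀ ≥ 0`, every eigenvalue `ρ`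
of `W t₀` satisfies `exp (−N t₀) ≤ |ρ| ≤ exp (N t₀)` with `N t₀ = ∫₀^{t₀} ‖A s‖ ds`. -/
theorem abs_eigenvalue_cauchy_bounds
    (n : ℕ) (hn : 1 ≤ n) {E : Type*} [NormedAddCommGroup E] [NormedSpace ℂ E]
    (coords : E ≃ₗ[ℂ] (Fin n → ℂ))
    (A : ℝ → E →L[ℂ] E) (hA : Continuous A)
    (W : ℝ → E →L[ℂ] E)
    (hW : ∀ t, HasDerivAt W ((A t).comp (W t)) t)
    (hW0 : W 0 = ContinuousLinearMap.id ℂ E)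
    (t₀ : ℝ) (ht₀ : 0 ≤ t₀)
    (ρ : ℂ) (v : E) (hv : v ≠ 0) (hρ : W t₀ v = ρ • v) :
    Real.exp (-∫ s in (0:ℝ)..t₀, ‖A s‖) ≤ ‖ρ‖ ∧
      ‖ρ‖ ≤ Real.exp (∫ s in (0:ℝ)..t₀, ‖A s‖) :=
  abs_eigenvalue_cauchy_bounds_general A hA W hW hW0 t₀ ht₀ ρ v hv hρ
end

section
/- Let L > 0 and define f : ℂⁿ → ℂⁿ by f(z) = i·L·z. Then for any norm ‖·‖ on ℂⁿ: (a) f is Lipschitz with constant L, and L is the smallest Lipschitz constant of f; (b) for every z₀ ≠ 0, the function z(t) = exp(i·L·t)·z₀ is a nonconstant solution of z' = f(z) which is periodic with period 2π/L, and every period P > 0 of this solution satisfies P ≥ 2π/L (so its minimal period is exactly 2π/L). -/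
/-!
Multiplication by `c` scales every difference by exactly `‖c‖`, so `‖i L‖ = L` is the best
Lipschitz constant of `f` on any nontrivial normed space. The solution `t ↦ exp (i L t) • z₀`
returns to a value only when `exp (i L P) = 1`, i.e. when `L P ∈ 2πℤ`; a positive period
therefore satisfies `L P ≥ 2π`. Nonconstancy follows from the same bound, since a constant
curve would have period `π / L`.
-/

open Complex Function

section LipschitzConstant

variable {𝕜 E : Type*} [NormedField 𝕜] [NormedAddCommGroup E] [NormedSpace 𝕜 E]

theorem norm_smul_sub_smul (c : 𝕜) (x y : E) : ‖c • x - c • y‖ = ‖c‖ * ‖x - y‖ := by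
  rw [← smul_sub, norm_smul]

theorem norm_le_of_norm_smul_sub_smul_le [Nontrivial E] {c : 𝕜} {K : ℝ}
    (h : ∀ x y : E, ‖c • x - c • y‖ ≤ K * ‖x - y‖) : ‖c‖ ≤ K := by
  obtain ⟨x, hx⟩ := exists_ne (0 : E)
  have hcx := h x 0
  rw [norm_smul_sub_smul, sub_zero] at hcx
  exact le_of_mul_le_mul_right hcx (norm_pos_iff.mpr hx)

end LipschitzConstant

theorem norm_I_mul_ofReal {L : ℝ} (hL : 0 ≤ L) : ‖I * (L : ℂ)‖ = L := by
  rw [norm_mul, norm_I, one_mul, norm_real, Real.norm_of_nonneg hL]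

theorem two_pi_le_of_exp_mul_I_eq_one {x : ℝ} (hx : 0 < x) (h : exp (x * I) = 1) :
    2 * Real.pi ≤ x := by
  obtain ⟨k, hk⟩ := exp_eq_one_iff.mp h
  have hxk : x = k * (2 * Real.pi) := by simpa using congrArg im hk
  have hk_pos : (0 : ℝ) < k := by
    rw [hxk] at hx
    exact pos_of_mul_pos_left hx Real.two_pi_pos.le
  have hk_one : (1 : ℝ) ≤ k := by exact_mod_cast (Int.cast_pos.mp hk_pos : 0 < k)
  calc 2 * Real.pi = 1 * (2 * Real.pi) := (one_mul _).symm
    _ ≤ k * (2 * Real.pi) := by gcongr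
    _ = x := hxk.symm

section ExpCurve

variable {E : Type*} [NormedAddCommGroup E] [NormedSpace ℂ E]

theorem hasDerivAt_exp_mul_ofReal_smul (a : ℂ) (z₀ : E) (t : ℝ) :
    HasDerivAt (fun s : ℝ => exp (a * s) • z₀) (a • exp (a * t) • z₀) t := by
  have h : HasDerivAt (fun w : ℂ => exp (a * w)) (exp (a * t) * a) t := by
    simpa using ((hasDerivAt_id (t : ℂ)).const_mul a).cexp
  rw [smul_smul, mul_comm]
  exact h.comp_ofReal.smul_const z₀

theorem periodic_exp_mul_ofReal_smul {a : ℂ} {P : ℝ} (h : exp (a * P) = 1) (z₀ : E) :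
    Periodic (fun s : ℝ => exp (a * s) • z₀) P := fun t => by
  simp only [ofReal_add, mul_add, exp_add, h, mul_one]

theorem exp_mul_ofReal_eq_one_of_periodic {a : ℂ} {P : ℝ} {z₀ : E} (hz₀ : z₀ ≠ 0)
    (h : Periodic (fun s : ℝ => exp (a * s) • z₀) P) : exp (a * P) = 1 :=
  smul_left_injective ℂ hz₀ (by simpa using h 0)

theorem periodic_exp_I_mul_ofReal_smul_two_pi_div {ω : ℝ} (hω : ω ≠ 0) (z₀ : E) :
    Periodic (fun s : ℝ => exp (I * ω * s) • z₀) (2 * Real.pi / ω) := by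
  have hω' : (ω : ℂ) ≠ 0 := ofReal_ne_zero.mpr hω
  refine periodic_exp_mul_ofReal_smul ?_ z₀
  rw [← exp_two_pi_mul_I]
  congr 1
  push_cast
  field_simp

theorem two_pi_div_le_of_periodic_exp_I_mul_ofReal_smul {ω P : ℝ} (hω : 0 < ω) (hP : 0 < P)
    {z₀ : E} (hz₀ : z₀ ≠ 0) (h : Periodic (fun s : ℝ => exp (I * ω * s) • z₀) P) :
    2 * Real.pi / ω ≤ P := by
  have hexp : exp ((ω * P : ℝ) * I) = 1 := by
    rw [← exp_mul_ofReal_eq_one_of_periodic hz₀ h]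
    push_cast
    ring_nf
  rw [div_le_iff₀ hω, mul_comm P]
  exact two_pi_le_of_exp_mul_I_eq_one (mul_pos hω hP) hexp

end ExpCurve

/-- sharpness of the bound `2π/L`, system (2.25) of the paper.
For `f z = i L z` on `ℂⁿ` with an arbitrary norm (modelled as a space `E` linearly
identified with `Fin n → ℂ`): (a) `L` is the smallest Lipschitz constant of `f`;
(b) for every `z₀ ≠ 0`, `z t = exp (i L t) • z₀` is a nonconstant solution of `z' = f z`
that is `2π/L`-periodic, and every period `P > 0` of it satisfies `P ≥ 2π/L`. -/
theorem sharpness_two_pi_div_lipschitz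
    (n : ℕ) (hn : 1 ≤ n) {E : Type*} [NormedAddCommGroup E] [NormedSpace ℂ E]
    (coords : E ≃ₗ[ℂ] (Fin n → ℂ))
    (L : ℝ) (hL : 0 < L)
    (f : E → E) (hf : ∀ x, f x = (Complex.I * (L : ℂ)) • x) :
    ((∀ x y, ‖f x - f y‖ ≤ L * ‖x - y‖) ∧
      (∀ L' : ℝ, (∀ x y, ‖f x - f y‖ ≤ L' * ‖x - y‖) → L ≤ L')) ∧
    (∀ z₀ : E, z₀ ≠ 0 →
      (∀ t : ℝ, HasDerivAt (fun s : ℝ => Complex.exp (Complex.I * (L : ℂ) * (s : ℂ)) • z₀)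
        (f (Complex.exp (Complex.I * (L : ℂ) * (t : ℂ)) • z₀)) t) ∧
      (∃ t₁ t₂ : ℝ, Complex.exp (Complex.I * (L : ℂ) * (t₁ : ℂ)) • z₀ ≠
        Complex.exp (Complex.I * (L : ℂ) * (t₂ : ℂ)) • z₀) ∧
      (∀ t : ℝ, Complex.exp (Complex.I * (L : ℂ) * ((t + 2 * Real.pi / L : ℝ) : ℂ)) • z₀ =
        Complex.exp (Complex.I * (L : ℂ) * (t : ℂ)) • z₀) ∧
      (∀ P : ℝ, 0 < P →
        (∀ t : ℝ, Complex.exp (Complex.I * (L : ℂ) * ((t + P : ℝ) : ℂ)) • z₀ =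
          Complex.exp (Complex.I * (L : ℂ) * (t : ℂ)) • z₀) →
        2 * Real.pi / L ≤ P)) := by
  have hIL := norm_I_mul_ofReal hL.le
  have : Nonempty (Fin n) := ⟨⟨0, hn⟩⟩
  have : Nontrivial E := coords.toEquiv.nontrivial
  simp only [hf]
  refine ⟨⟨fun x y => (norm_smul_sub_smul _ x y).trans_le (by rw [hIL]),
    fun L' h => hIL ▸ norm_le_of_norm_smul_sub_smul_le h⟩, fun z₀ hz₀ => ?_⟩
  have hbound := fun P (hP : 0 < P) => two_pi_div_le_of_periodic_exp_I_mul_ofReal_smul hL hP hz₀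
  refine ⟨hasDerivAt_exp_mul_ofReal_smul _ z₀, ?_,
    periodic_exp_I_mul_ofReal_smul_two_pi_div hL.ne' z₀, hbound⟩
  by_contra! hconst
  have hle := hbound (Real.pi / L) (by positivity) fun t => hconst _ _
  rw [mul_div_assoc] at hle
  linarith [div_pos Real.pi_pos hL]
end

section
/- Let r ≥ 2, c > 0, and let A be a linear map on ℂⁿ, where ℂⁿ carries a norm ‖·‖. Equip the product space (ℂⁿ)^r (functions v : Fin r → ℂⁿ) with the norm ‖v‖ = Σ_{k=0}^{r−1} ‖v_k‖, and define the linear map V on (ℂⁿ)^r by (V v)_k = c·v_{k+1} for 0 ≤ k ≤ r−2 and (V v)_{r−1} = c^{1−r}·A v₀. Then the operator norm of V equals max(c, c^{1−r}·‖A‖), where ‖A‖ is the operator norm of A induced by ‖·‖. -/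
/-- formula (2.28) of the paper. Let `r ≥ 2`, `c > 0` and let `A` be a
(continuous) linear map on `ℂⁿ` with an arbitrary norm (modelled as a space `E` linearly
identified with `Fin n → ℂ`). Equip `(ℂⁿ)^r` with the norm `‖v‖ = Σ_k ‖v k‖` and let
`V v = (c·v₁, …, c·v_{r−1}, c^{1−r}·A v₀)` be the companion operator. Then the operator
norm of `V` w.r.t. this norm equals `max c (c^{1−r}·‖A‖)`: it is a bound, and it is the
least bound. -/
theorem opNorm_companion_eq_max
    (n : ℕ) (hn : 1 ≤ n) {E : Type*} [NormedAddCommGroup E] [NormedSpace ℂ E]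
    (coords : E ≃ₗ[ℂ] (Fin n → ℂ))
    (r : ℕ) (hr : 2 ≤ r) (c : ℝ) (hc : 0 < c)
    (A : E →L[ℂ] E)
    (V : (Fin r → E) → (Fin r → E))
    (hV : ∀ (v : Fin r → E) (k : Fin r),
      V v k = if h : (k : ℕ) + 1 < r then ((c : ℂ)) • v ⟨(k : ℕ) + 1, h⟩
        else ((c : ℂ) ^ (1 - (r : ℤ))) • A (v ⟨0, by omega⟩)) :
    (∀ v : Fin r → E, (∑ k, ‖V v k‖) ≤ max c (c ^ (1 - (r : ℤ)) * ‖A‖) * ∑ k, ‖v k‖) ∧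
    (∀ M : ℝ, (∀ v : Fin r → E, (∑ k, ‖V v k‖) ≤ M * ∑ k, ‖v k‖) →
      max c (c ^ (1 - (r : ℤ)) * ‖A‖) ≤ M) := by
  haveI : NeZero r := ⟨by omega⟩
  set m : ℝ := c ^ (1 - (r : ℤ)) with hm
  have hmpos : 0 < m := zpow_pos hc _
  have hcnorm : ‖(c : ℂ)‖ = c := by
    rw [Complex.norm_real]; exact abs_of_pos hc
  have hznorm : ‖((c : ℂ) ^ (1 - (r : ℤ)))‖ = m := by
    rw [norm_zpow, hcnorm]
  have h1 : ((1 : Fin r) : ℕ) = 1 := by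
    rw [Fin.val_one']; exact Nat.mod_eq_of_lt (by omega)
  have hadd : ∀ (k : Fin r) (h : (k : ℕ) + 1 < r), (k + 1 : Fin r) = ⟨(k : ℕ) + 1, h⟩ := by
    intro k h
    apply Fin.ext
    rw [Fin.val_add, h1]
    exact Nat.mod_eq_of_lt h
  have hadd0 : ∀ (k : Fin r), ¬ ((k : ℕ) + 1 < r) → (k + 1 : Fin r) = ⟨0, by omega⟩ := by
    intro k h
    apply Fin.ext
    rw [Fin.val_add, h1]
    have : (k : ℕ) + 1 = r := by have := k.isLt; omega
    simp [this]
  -- upper bound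
  have upper : ∀ v : Fin r → E, (∑ k, ‖V v k‖) ≤ max c (m * ‖A‖) * ∑ k, ‖v k‖ := by
    intro v
    calc ∑ k, ‖V v k‖ ≤ ∑ k, max c (m * ‖A‖) * ‖v (k + 1)‖ := by
          refine Finset.sum_le_sum fun k _ => ?_
          rw [hV]
          split_ifs with h
          · rw [hadd k h, norm_smul, hcnorm]
            exact mul_le_mul_of_nonneg_right (le_max_left _ _) (norm_nonneg _)
          · rw [hadd0 k h, norm_smul, hznorm]
            calc m * ‖A (v ⟨0, by omega⟩)‖ ≤ m * (‖A‖ * ‖v ⟨0, by omega⟩‖) :=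
                  mul_le_mul_of_nonneg_left (A.le_opNorm _) hmpos.le
              _ = (m * ‖A‖) * ‖v ⟨0, by omega⟩‖ := by ring
              _ ≤ max c (m * ‖A‖) * ‖v ⟨0, by omega⟩‖ :=
                  mul_le_mul_of_nonneg_right (le_max_right _ _) (norm_nonneg _)
      _ = max c (m * ‖A‖) * ∑ k, ‖v (k + 1)‖ := by rw [Finset.mul_sum]
      _ = max c (m * ‖A‖) * ∑ k, ‖v k‖ := by
          congr 1
          exact Fintype.sum_equiv (Equiv.addRight (1 : Fin r)) _ _ (fun k => rfl)
  refine ⟨upper, fun M hM => ?_⟩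
  obtain ⟨x, hx⟩ : ∃ x : E, x ≠ 0 := by
    refine ⟨coords.symm (fun _ => 1), fun h => ?_⟩
    have h2 := congrArg coords h
    simp only [coords.apply_symm_apply, map_zero] at h2
    exact one_ne_zero (congrFun h2 ⟨0, hn⟩)
  have hxpos : 0 < ‖x‖ := norm_pos_iff.mpr hx
  have hsum : ∀ (j : Fin r) (y : E), (∑ k, ‖(fun k => if k = j then y else 0) k‖) = ‖y‖ := by
    intro j y
    simp [apply_ite (‖·‖)]
  -- c ≤ M
  have hcM : c ≤ M := by
    set v : Fin r → E := fun k => if k = ⟨1, by omega⟩ then x else 0 with hv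
    have hbound := hM v
    rw [hsum] at hbound
    have hterm : ‖V v ⟨0, by omega⟩‖ = c * ‖x‖ := by
      rw [hV]
      have h01 : (0 : ℕ) + 1 < r := by omega
      rw [dif_pos h01]
      have : v ⟨0 + 1, h01⟩ = x := by simp [hv]
      rw [this, norm_smul, hcnorm]
    have hle : ‖V v ⟨0, by omega⟩‖ ≤ ∑ k, ‖V v k‖ :=
      Finset.single_le_sum (fun k _ => norm_nonneg _) (Finset.mem_univ _)
    rw [hterm] at hle
    have := le_trans hle hbound
    exact le_of_mul_le_mul_right (by linarith) hxpos
  have hMpos : 0 < M := lt_of_lt_of_le hc hcM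
  -- m * ‖A‖ ≤ M
  have hAM : m * ‖A‖ ≤ M := by
    have hA : ‖A‖ ≤ M / m := by
      refine A.opNorm_le_bound (by positivity) fun y => ?_
      set v : Fin r → E := fun k => if k = ⟨0, by omega⟩ then y else 0 with hv
      have hbound := hM v
      rw [hsum] at hbound
      have hlast : ¬ ((r - 1 : ℕ) + 1 < r) := by omega
      have hterm : ‖V v ⟨r - 1, by omega⟩‖ = m * ‖A y‖ := by
        rw [hV, dif_neg]
        · have : v ⟨0, by omega⟩ = y := by simp [hv]
          rw [this, norm_smul, hznorm]
        · simpa using hlast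
      have hle : ‖V v ⟨r - 1, by omega⟩‖ ≤ ∑ k, ‖V v k‖ :=
        Finset.single_le_sum (fun k _ => norm_nonneg _) (Finset.mem_univ _)
      rw [hterm] at hle
      have h3 : m * ‖A y‖ ≤ M * ‖y‖ := le_trans hle hbound
      rw [div_mul_eq_mul_div, le_div_iff₀ hmpos]
      linarith [h3]
    calc m * ‖A‖ ≤ m * (M / m) := mul_le_mul_of_nonneg_left hA hmpos.le
      _ = M := by field_simp
  exact max_le hcM hAM
end

section
/- Let n ≥ 1, T > 0, and let P : ℝ → M_n(ℝ) be continuous with P(t+T) = P(t), P(t) symmetric and positive definite for every t. Equip ℝⁿ with an arbitrary norm ‖·‖ and let ‖P(t)‖ be the induced operator norm. If there exists c > 0 such that ∫₀ᵀ max(c, c^{−1}·‖P(t)‖) dt < π, then the only twice continuously differentiable x : ℝ → ℝⁿ satisfying x''(t) + P(t)·x(t) = 0 and x(t+T) = −x(t) for all t is x ≡ 0. -/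
open Set Real InnerProductGeometry
open scoped RealInnerProductSpace

/-!
For `c > 0` the phase vector `y = (c x, x')`, with the Euclidean norm on `ℝⁿ × ℝⁿ`, satisfies
`‖y'‖ ≤ M ‖y‖` where `M = max (c, c⁻¹ ‖P‖)`: the Euclidean operator norm of a symmetric matrix is
its spectral radius, which is bounded by its operator norm for any norm. By Grönwall, `y` either
vanishes identically or nowhere. In the latter case the angle between `y 0` and `y t` grows at
rate at most `‖y'‖ / ‖y‖ ≤ M`, so `angle (y 0) (y T) ≤ ∫₀ᵀ M < π`, whereas anti-periodicity gives
`y T = -y 0`, at angle `π`.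
-/

theorem ContinuousLinearMap.norm_le_norm_conj_of_isSelfAdjoint
    {F E : Type*} [NormedAddCommGroup F] [InnerProductSpace ℝ F] [CompleteSpace F]
    [NormedAddCommGroup E] [NormedSpace ℝ E] [CompleteSpace E]
    {T : F →L[ℝ] F} (hT : IsSelfAdjoint T) (e : F ≃L[ℝ] E) :
    ‖T‖ ≤ ‖e.conjContinuousAlgEquiv T‖ := by
  nontriviality F
  have : Nontrivial E := e.symm.toEquiv.nontrivial
  have h := spectrum.spectralRadius_le_nnnorm (𝕜 := ℝ) (e.conjContinuousAlgEquiv T)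
  rwa [spectralRadius, AlgEquiv.spectrum_eq, ← spectralRadius,
    T.spectralRadius_eq_nnnorm hT, ENNReal.coe_le_coe] at h

section Coordinates

variable {ι E : Type*} [Fintype ι] [DecidableEq ι] [NormedAddCommGroup E] [NormedSpace ℝ E]
  [FiniteDimensional ℝ E] (coords : E ≃ₗ[ℝ] (ι → ℝ))

theorem Matrix.IsSymm.norm_toLp_mulVec_le {Q : Matrix ι ι ℝ} (hQ : Q.IsSymm) (v : ι → ℝ) :
    ‖WithLp.toLp 2 (Q.mulVec v)‖ ≤ ‖LinearMap.toContinuousLinearMap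
      (coords.symm.toLinearMap ∘ₗ Q.mulVecLin ∘ₗ coords.toLinearMap)‖ * ‖WithLp.toLp 2 v‖ := by
  let φ : E ≃L[ℝ] EuclideanSpace ℝ ι :=
    coords.toContinuousLinearEquiv.trans (EuclideanSpace.equiv ι ℝ).symm
  have hconj : LinearMap.toContinuousLinearMap
      (coords.symm.toLinearMap ∘ₗ Q.mulVecLin ∘ₗ coords.toLinearMap) =
      φ.symm.conjContinuousAlgEquiv (Matrix.toEuclideanCLM (𝕜 := ℝ) Q) := by
    ext z; simp [φ]; rfl
  rw [hconj]
  exact (Matrix.toEuclideanCLM (𝕜 := ℝ) Q).le_opNorm _ |>.trans <| mul_le_mul_of_nonneg_right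
    (ContinuousLinearMap.norm_le_norm_conj_of_isSelfAdjoint
      ((Matrix.isHermitian_iff_isSymm.mpr hQ).isSelfAdjoint.map _) φ.symm) (norm_nonneg _)

theorem Continuous.toContinuousLinearMap_conj_mulVecLin {P : ℝ → Matrix ι ι ℝ}
    (hP : Continuous P) : Continuous fun t ↦ LinearMap.toContinuousLinearMap
      (coords.symm.toLinearMap ∘ₗ (P t).mulVecLin ∘ₗ coords.toLinearMap) := by
  let L : Matrix ι ι ℝ →ₗ[ℝ] E →L[ℝ] E :=
    (LinearMap.toContinuousLinearMap : (E →ₗ[ℝ] E) ≃ₗ[ℝ] E →L[ℝ] E).toLinearMap ∘ₗ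
      coords.symm.conj.toLinearMap ∘ₗ Matrix.toLin'.toLinearMap
  exact L.continuous_of_finiteDimensional.comp hP

end Coordinates

theorem eq_zero_of_norm_deriv_le_mul_norm {F : Type*} [NormedAddCommGroup F] [NormedSpace ℝ F]
    {y y' : ℝ → F} {M : ℝ → ℝ} (hy : ∀ t, HasDerivAt y (y' t) t) (hM : Continuous M)
    (hbound : ∀ t, ‖y' t‖ ≤ M t * ‖y t‖) {t₀ : ℝ} (h₀ : y t₀ = 0) (t : ℝ) : y t = 0 := by
  wlog ht : t₀ ≤ t generalizing y y' M t₀ t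
  · simpa using this (y := fun s ↦ y (-s)) (y' := fun s ↦ -y' (-s)) (M := fun s ↦ M (-s))
      (fun s ↦ by simpa [Function.comp_def] using (hy (-s)).scomp s (hasDerivAt_neg s))
      (hM.comp continuous_neg)
      (fun s ↦ by simpa using hbound (-s)) (t₀ := -t₀) (by simpa using h₀) (-t) (by linarith)
  obtain ⟨K, hK⟩ := isCompact_Icc.exists_bound_of_continuousOn (hM.continuousOn (s := Icc t₀ t))
  refine eq_zero_of_abs_deriv_le_mul_abs_self_of_eq_zero_right (K := K)
    (fun s _ ↦ (hy s).continuousAt.continuousWithinAt) (fun s _ ↦ (hy s).hasDerivWithinAt) h₀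
    (fun s hs ↦ ?_) t ⟨ht, le_rfl⟩
  exact (hbound s).trans (mul_le_mul_of_nonneg_right
    ((le_abs_self _).trans (hK s (Ico_subset_Icc_self hs))) (norm_nonneg _))

section Angle

variable {F : Type*} [NormedAddCommGroup F] [InnerProductSpace ℝ F]

theorem HasDerivAt.norm_of_ne_zero {y : ℝ → F} {y' : F} {t : ℝ} (hy : HasDerivAt y y' t)
    (hyt : y t ≠ 0) : HasDerivAt (fun s ↦ ‖y s‖) (⟪y t, y'⟫ / ‖y t‖) t := by
  have h := hy.norm_sq.sqrt (by positivity)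
  simp only [sqrt_sq (norm_nonneg _)] at h
  convert h using 1
  field_simp

theorem HasDerivAt.cos_angle {v : F} {y : ℝ → F} {y' : F} {t : ℝ} (hy : HasDerivAt y y' t)
    (hv : v ≠ 0) (hyt : y t ≠ 0) :
    HasDerivAt (fun s ↦ Real.cos (angle v (y s)))
      ((⟪v, y'⟫ * ‖y t‖ ^ 2 - ⟪v, y t⟫ * ⟪y t, y'⟫) / (‖v‖ * ‖y t‖ ^ 3)) t := by
  simp only [InnerProductGeometry.cos_angle]
  have hnum : HasDerivAt (fun s ↦ ⟪v, y s⟫) ⟪v, y'⟫ t := by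
    simpa using (hasDerivAt_const t v).inner ℝ hy
  refine (hnum.fun_div ((hy.norm_of_ne_zero hyt).const_mul ‖v‖) (by positivity)).congr_deriv ?_
  field_simp

theorem abs_inner_mul_norm_sq_sub_le (v w z : F) :
    |⟪v, z⟫ * ‖w‖ ^ 2 - ⟪v, w⟫ * ⟪w, z⟫| ≤ ‖v‖ * ‖w‖ ^ 2 * Real.sin (angle v w) * ‖z‖ := by
  have hnorm : ‖‖w‖ ^ 2 • v - ⟪v, w⟫ • w‖ = ‖w‖ * (Real.sin (angle v w) * (‖v‖ * ‖w‖)) := by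
    refine (pow_left_inj₀ (norm_nonneg _) (by have := sin_angle_nonneg v w; positivity)
      two_ne_zero).mp ?_
    have hcos := cos_angle_mul_norm_mul_norm v w
    rw [← real_inner_self_eq_norm_sq, mul_pow, mul_pow, Real.sin_sq]
    simp only [inner_sub_left, inner_sub_right, real_inner_smul_left, real_inner_smul_right]
    simp only [real_inner_self_eq_norm_sq, real_inner_comm v w]
    rw [← hcos]
    ring
  calc |⟪v, z⟫ * ‖w‖ ^ 2 - ⟪v, w⟫ * ⟪w, z⟫| = |⟪‖w‖ ^ 2 • v - ⟪v, w⟫ • w, z⟫| := by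
        rw [inner_sub_left, real_inner_smul_left, real_inner_smul_left, mul_comm]
    _ ≤ ‖‖w‖ ^ 2 • v - ⟪v, w⟫ • w‖ * ‖z‖ := abs_real_inner_le_norm _ _
    _ = ‖v‖ * ‖w‖ ^ 2 * Real.sin (angle v w) * ‖z‖ := by rw [hnorm]; ring

/-- The angle is not differentiable where it is `0` or `π`, so it is compared with `S` through
cosines, by a barrier argument on `[a, b]`. -/
theorem angle_le_of_norm_deriv_lt {y y' : ℝ → F} {S S' : ℝ → ℝ} {a b : ℝ} (hab : a ≤ b)
    (hy : ∀ t ∈ Icc a b, HasDerivAt y (y' t) t) (hy₀ : ∀ t ∈ Icc a b, y t ≠ 0)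
    (hS : ∀ t ∈ Icc a b, HasDerivAt S (S' t) t) (hSπ : ∀ t ∈ Icc a b, S t ∈ Ioo 0 π)
    (hlt : ∀ t ∈ Icc a b, ‖y' t‖ < S' t * ‖y t‖) :
    angle (y a) (y b) ≤ S b := by
  have ha : a ∈ Icc a b := ⟨le_rfl, hab⟩
  have hb : b ∈ Icc a b := ⟨hab, le_rfl⟩
  have hya := hy₀ a ha
  have hθ : ∀ t ∈ Icc a b, HasDerivAt (fun s ↦ -Real.cos (angle (y a) (y s))) _ t :=
    fun t ht ↦ ((hy t ht).cos_angle hya (hy₀ t ht)).neg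
  have hψ : ∀ t ∈ Icc a b, HasDerivAt (fun s ↦ -Real.cos (S s)) _ t :=
    fun t ht ↦ (hS t ht).cos.neg
  have hcos := image_le_of_deriv_right_lt_deriv_boundary'
    (fun t ht ↦ (hθ t ht).continuousAt.continuousWithinAt)
    (fun t ht ↦ (hθ t (Ico_subset_Icc_self ht)).hasDerivWithinAt)
    (by simpa [angle_self hya] using Real.cos_le_one (S a))
    (fun t ht ↦ (hψ t ht).continuousAt.continuousWithinAt)
    (fun t ht ↦ (hψ t (Ico_subset_Icc_self ht)).hasDerivWithinAt)
    (fun t ht heq ↦ ?_) hb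
  · have hSb := hSπ b hb
    exact (strictAntiOn_cos.le_iff_ge ⟨hSb.1.le, hSb.2.le⟩
      ⟨angle_nonneg _ _, angle_le_pi _ _⟩).mp (neg_le_neg_iff.mp hcos)
  · have ht' := Ico_subset_Icc_self ht
    have hSt := hSπ t ht'
    have hθS : angle (y a) (y t) = S t := injOn_cos ⟨angle_nonneg _ _, angle_le_pi _ _⟩
      ⟨hSt.1.le, hSt.2.le⟩ (neg_inj.mp heq)
    have hyt : 0 < ‖y t‖ := norm_pos_iff.mpr (hy₀ t ht')
    have hsin : 0 < Real.sin (S t) := sin_pos_of_pos_of_lt_pi hSt.1 hSt.2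
    have hnum := abs_inner_mul_norm_sq_sub_le (y a) (y t) (y' t)
    rw [hθS] at hnum
    have hya' : 0 < ‖y a‖ := norm_pos_iff.mpr hya
    rw [neg_mul, neg_neg, ← neg_div, div_lt_iff₀ (by positivity)]
    calc -(⟪y a, y' t⟫ * ‖y t‖ ^ 2 - ⟪y a, y t⟫ * ⟪y t, y' t⟫)
        ≤ ‖y a‖ * ‖y t‖ ^ 2 * (Real.sin (S t) * ‖y' t‖) := by
          rw [← mul_assoc]; exact (neg_le_abs _).trans hnum
      _ < ‖y a‖ * ‖y t‖ ^ 2 * (Real.sin (S t) * (S' t * ‖y t‖)) := by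
          gcongr; exact hlt t ht'
      _ = Real.sin (S t) * S' t * (‖y a‖ * ‖y t‖ ^ 3) := by ring

theorem angle_le_integral_of_norm_deriv_le {y y' : ℝ → F} {M : ℝ → ℝ} {a b : ℝ} (hab : a ≤ b)
    (hy : ∀ t ∈ Icc a b, HasDerivAt y (y' t) t) (hy₀ : ∀ t ∈ Icc a b, y t ≠ 0)
    (hM : Continuous M) (hbound : ∀ t ∈ Icc a b, ‖y' t‖ ≤ M t * ‖y t‖) :
    angle (y a) (y b) ≤ ∫ t in a..b, M t := by
  have hM₀ : ∀ t ∈ Icc a b, 0 ≤ M t := fun t ht ↦ le_of_mul_le_mul_right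
    (by simpa using (norm_nonneg _).trans (hbound t ht)) (norm_pos_iff.mpr (hy₀ t ht))
  refine le_of_forall_pos_le_add fun ε hε ↦ ?_
  rcases le_or_gt π ((∫ t in a..b, M t) + ε) with hπ | hπ
  · exact (angle_le_pi _ _).trans hπ
  -- the comparison function `η (t - a + 1) + ∫ₐᵗ M` starts positive and grows strictly faster
  set η := ε / (b - a + 1)
  have hη : 0 < η := div_pos hε (by linarith)
  have hS : ∀ t, HasDerivAt (fun t ↦ η * (t - a + 1) + ∫ s in a..t, M s) (η + M t) t := fun t ↦
    (((hasDerivAt_id t).sub_const a).add_const 1 |>.const_mul η |>.congr_deriv (mul_one η)).add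
      (hM.integral_hasStrictDerivAt a t).hasDerivAt
  have hSb : η * (b - a + 1) + ∫ s in a..b, M s = (∫ t in a..b, M t) + ε := by
    rw [div_mul_cancel₀ _ (by linarith : b - a + 1 ≠ 0)]; ring
  refine hSb ▸ angle_le_of_norm_deriv_lt hab hy hy₀ (fun t _ ↦ hS t) (fun t ht ↦ ⟨?_, ?_⟩)
    (fun t ht ↦ ?_)
  · have : 0 ≤ ∫ s in a..t, M s :=
      intervalIntegral.integral_nonneg ht.1 fun s hs ↦ hM₀ s ⟨hs.1, hs.2.trans ht.2⟩
    have : 0 < η * (t - a + 1) := mul_pos hη (by linarith [ht.1])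
    linarith
  · have : ∫ s in a..t, M s ≤ ∫ s in a..b, M s :=
      intervalIntegral.integral_mono_interval le_rfl ht.1 ht.2
        (MeasureTheory.ae_restrict_of_forall_mem measurableSet_Ioc
          fun s hs ↦ hM₀ s (Ioc_subset_Icc_self hs))
        (hM.intervalIntegrable a b)
    have : η * (t - a + 1) ≤ η * (b - a + 1) := by gcongr; exact ht.2
    linarith
  · exact (hbound t ht).trans_lt
      (mul_lt_mul_of_pos_right (by linarith) (norm_pos_iff.mpr (hy₀ t ht)))

theorem eq_zero_of_eq_neg_of_norm_deriv_le {y y' : ℝ → F} {M : ℝ → ℝ} {T : ℝ} (hT : 0 ≤ T)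
    (hy : ∀ t, HasDerivAt y (y' t) t) (hM : Continuous M) (hbound : ∀ t, ‖y' t‖ ≤ M t * ‖y t‖)
    (hanti : y T = -y 0) (hMT : ∫ t in 0..T, M t < π) (t : ℝ) : y t = 0 := by
  by_contra ht
  have hy₀ : ∀ s, y s ≠ 0 := fun s hs ↦ ht (eq_zero_of_norm_deriv_le_mul_norm hy hM hbound hs t)
  have hangle := angle_le_integral_of_norm_deriv_le hT (fun s _ ↦ hy s) (fun s _ ↦ hy₀ s) hM
    (fun s _ ↦ hbound s)
  rw [hanti, angle_self_neg_of_nonzero (hy₀ 0)] at hangle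
  linarith

end Angle

section PhaseVector

variable {G : Type*} [NormedAddCommGroup G] [NormedSpace ℝ G]

def phaseVector (c : ℝ) (u v : G) : WithLp 2 (G × G) := WithLp.toLp 2 (c • u, v)

theorem phaseVector_neg (c : ℝ) (u v : G) :
    phaseVector c (-u) (-v) = -phaseVector c u v := by
  simp [phaseVector, ← WithLp.toLp_neg]

theorem phaseVector_eq_zero_iff {c : ℝ} (hc : c ≠ 0) {u v : G} :
    phaseVector c u v = 0 ↔ u = 0 ∧ v = 0 := by
  simp [phaseVector, hc]

theorem HasDerivAt.phaseVector {u v : ℝ → G} {u' v' : G} {t : ℝ} (c : ℝ)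
    (hu : HasDerivAt u u' t) (hv : HasDerivAt v v' t) :
    HasDerivAt (fun s ↦ phaseVector c (u s) (v s)) (phaseVector c u' v') t :=
  (WithLp.prodContinuousLinearEquiv 2 ℝ G G).symm.hasFDerivAt.comp_hasDerivAt t
    ((hu.const_smul c).prodMk hv)

theorem norm_phaseVector_le {c K : ℝ} (hc : 0 < c) {u v w : G} (hw : ‖w‖ ≤ K * ‖u‖) :
    ‖phaseVector c v w‖ ≤ max c (c⁻¹ * K) * ‖phaseVector c u v‖ := by
  set m := max c (c⁻¹ * K)
  have hm : 0 ≤ m := hc.le.trans (le_max_left _ _)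
  have hv : ‖c • v‖ ≤ m * ‖v‖ := by
    rw [norm_smul, Real.norm_of_nonneg hc.le]
    exact mul_le_mul_of_nonneg_right (le_max_left _ _) (norm_nonneg _)
  have hw' : ‖w‖ ≤ m * ‖c • u‖ := by
    calc ‖w‖ ≤ K * ‖u‖ := hw
      _ = c⁻¹ * K * ‖c • u‖ := by rw [norm_smul, Real.norm_of_nonneg hc.le]; field_simp
      _ ≤ m * ‖c • u‖ := mul_le_mul_of_nonneg_right (le_max_right _ _) (norm_nonneg _)
  refine (pow_le_pow_iff_left₀ (norm_nonneg _) (by positivity) two_ne_zero).mp ?_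
  have hv2 := pow_le_pow_left₀ (norm_nonneg _) hv 2
  have hw2 := pow_le_pow_left₀ (norm_nonneg _) hw' 2
  simp only [mul_pow, phaseVector, WithLp.prod_norm_sq_eq_of_L2, WithLp.toLp_fst,
    WithLp.toLp_snd] at hv2 hw2 ⊢
  linarith

end PhaseVector

theorem eq_zero_of_eq_neg_of_norm_deriv_deriv_le {G : Type*} [NormedAddCommGroup G]
    [InnerProductSpace ℝ G] {u u' u'' : ℝ → G} {K : ℝ → ℝ} {T c : ℝ} (hT : 0 ≤ T) (hc : 0 < c)
    (hu : ∀ t, HasDerivAt u (u' t) t) (hu' : ∀ t, HasDerivAt u' (u'' t) t) (hK : Continuous K)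
    (hbound : ∀ t, ‖u'' t‖ ≤ K t * ‖u t‖) (hKT : ∫ t in 0..T, max c (c⁻¹ * K t) < π)
    (huT : u T = -u 0) (hu'T : u' T = -u' 0) (t : ℝ) : u t = 0 := by
  have hy := eq_zero_of_eq_neg_of_norm_deriv_le hT (fun t ↦ (hu t).phaseVector c (hu' t))
    (continuous_const.max (continuous_const.mul hK)) (fun t ↦ norm_phaseVector_le hc (hbound t))
    (by rw [huT, hu'T, phaseVector_neg]) hKT t
  exact ((phaseVector_eq_zero_iff hc.ne').mp hy).1

theorem Function.Antiperiodic.deriv {F : Type*} [NormedAddCommGroup F] [NormedSpace ℝ F]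
    {f : ℝ → F} {T : ℝ} (h : Function.Antiperiodic f T) : Function.Antiperiodic (deriv f) T :=
  fun t ↦ by
    rw [← deriv_comp_add_const, show (fun s ↦ f (s + T)) = fun s ↦ -f s from funext h,
      deriv.fun_neg]

theorem second_order_no_antiperiodic_solution_general
    (n : ℕ) {E : Type*} [NormedAddCommGroup E] [NormedSpace ℝ E]
    [FiniteDimensional ℝ E]
    (coords : E ≃ₗ[ℝ] (Fin n → ℝ))
    (T : ℝ) (hT : 0 < T)
    (P : ℝ → Matrix (Fin n) (Fin n) ℝ)
    (hPcont : Continuous P)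
    (hPsymm : ∀ t, (P t).IsSymm)
    (c : ℝ) (hc : 0 < c)
    (hN : (∫ t in (0:ℝ)..T,
        max c (c⁻¹ * ‖LinearMap.toContinuousLinearMap
          (coords.symm.toLinearMap ∘ₗ (P t).mulVecLin ∘ₗ coords.toLinearMap)‖)) < Real.pi)
    (x : ℝ → E) (hxsm : ContDiff ℝ 2 x)
    (hx : ∀ t, iteratedDeriv 2 x t + coords.symm ((P t).mulVec (coords (x t))) = 0)
    (hanti : ∀ t, x (t + T) = -x t) :
    ∀ t, x t = 0 := by
  let φ : E ≃L[ℝ] EuclideanSpace ℝ (Fin n) :=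
    coords.toContinuousLinearEquiv.trans (EuclideanSpace.equiv (Fin n) ℝ).symm
  have hx₁ : ∀ t, HasDerivAt x (deriv x t) t := fun t ↦
    (hxsm.differentiable (by norm_num) t).hasDerivAt
  have hx₂ : ∀ t, HasDerivAt (deriv x) (-coords.symm ((P t).mulVec (coords (x t)))) t := by
    intro t
    have h := (hxsm.differentiable_iteratedDeriv 1 (by norm_num) t).hasDerivAt
    rwa [← iteratedDeriv_succ, eq_neg_of_add_eq_zero_left (hx t), iteratedDeriv_one] at h
  have hφx : ∀ t, HasDerivAt (fun s ↦ φ (x s)) (φ (deriv x t)) t := fun t ↦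
    φ.hasFDerivAt.comp_hasDerivAt t (hx₁ t)
  have hφx' : ∀ t, HasDerivAt (fun s ↦ φ (deriv x s))
      (φ (-coords.symm ((P t).mulVec (coords (x t))))) t := fun t ↦
    φ.hasFDerivAt.comp_hasDerivAt t (hx₂ t)
  intro t
  refine φ.map_eq_zero_iff.mp <| eq_zero_of_eq_neg_of_norm_deriv_deriv_le hT.le hc hφx hφx'
    (continuous_norm.comp (hPcont.toContinuousLinearMap_conj_mulVecLin coords)) (fun t ↦ ?_) hN
    ?_ ?_ t
  · simpa [φ] using (hPsymm t).norm_toLp_mulVec_le coords (coords (x t))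
  · rw [← map_neg, ← zero_add T, hanti 0]
  · rw [← map_neg, ← zero_add T, Function.Antiperiodic.deriv hanti 0]

/-- Theorem 10 of the paper. Let `P(t)` be a continuous, `T`-periodic,
symmetric, positive definite matrix family on `ℝⁿ` with an arbitrary norm (modelled as a
space `E` linearly identified with `Fin n → ℝ` via `coords`), with `‖P t‖` the induced
operator norm. If for some `c > 0`, `∫₀ᵀ max (c, c⁻¹ ‖P t‖) dt < π`, then the only twice
continuously differentiable `T`-anti-periodic solution of `x'' + P(t) x = 0` is trivial. -/
theorem second_order_no_antiperiodic_solution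
    (n : ℕ) (hn : 1 ≤ n) {E : Type*} [NormedAddCommGroup E] [NormedSpace ℝ E]
    [FiniteDimensional ℝ E]
    (coords : E ≃ₗ[ℝ] (Fin n → ℝ))
    (T : ℝ) (hT : 0 < T)
    (P : ℝ → Matrix (Fin n) (Fin n) ℝ)
    (hPcont : Continuous P)
    (hPper : ∀ t, P (t + T) = P t)
    (hPsymm : ∀ t, (P t).IsSymm)
    (hPpos : ∀ t, (P t).PosDef)
    (c : ℝ) (hc : 0 < c)
    (hN : (∫ t in (0:ℝ)..T,
        max c (c⁻¹ * ‖LinearMap.toContinuousLinearMap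
          (coords.symm.toLinearMap ∘ₗ (P t).mulVecLin ∘ₗ coords.toLinearMap)‖)) < Real.pi)
    (x : ℝ → E) (hxsm : ContDiff ℝ 2 x)
    (hx : ∀ t, iteratedDeriv 2 x t + coords.symm ((P t).mulVec (coords (x t))) = 0)
    (hanti : ∀ t, x (t + T) = -x t) :
    ∀ t, x t = 0 :=
  second_order_no_antiperiodic_solution_general n coords T hT P hPcont hPsymm c hc hN x hxsm hx
    hanti
end

section
/- Let V : ℝⁿ → ℝ be twice continuously differentiable and let ‖·‖ be an arbitrary norm on ℝⁿ. If the gradient field f = ∇V is Lipschitz with constant L with respect to ‖·‖, i.e. ‖∇V(x) − ∇V(y)‖ ≤ L·‖x − y‖ for all x, y ∈ ℝⁿ, then ∇V is Lipschitz with constant L with respect to the Euclidean norm: ‖∇V(x) − ∇V(y)‖₂ ≤ L·‖x − y‖₂ for all x, y ∈ ℝⁿ. -/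
/-!
The Jacobian `H` of `∇f` at any point is the symmetric Hessian of `f`. Lipschitz continuity of
`∇f` with respect to a norm `p` passes to its derivative, `p (H v) ≤ L * p v`, so every eigenvalue
of `H` has absolute value at most `L`. For a symmetric operator the Euclidean operator norm equals
the spectral radius, hence `‖H‖ ≤ L`, and the mean value inequality gives the Euclidean Lipschitz
bound with the same constant.
-/

open scoped RealInnerProductSpace Gradient
open Module.End

theorem HasFDerivAt.seminorm_apply_le_of_lipschitz {E F : Type*} [NormedAddCommGroup E]
    [NormedSpace ℝ E] [NormedAddCommGroup F] [NormedSpace ℝ F] (p : Seminorm ℝ E)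
    {q : Seminorm ℝ F} (hq : Continuous q) {g : E → F} {g' : E →L[ℝ] F} {x : E}
    (hg : HasFDerivAt g g' x) {L : ℝ} (hL : ∀ y, q (g y - g x) ≤ L * p (y - x)) (v : E) :
    q (g' v) ≤ L * p v := by
  have hline : HasDerivAt (fun t : ℝ => g (x + t • v)) (g' v) 0 := by
    have hc : HasDerivAt (fun t : ℝ => x + t • v) v 0 := by
      simpa using ((hasDerivAt_id (0 : ℝ)).smul_const v).const_add x
    exact (show HasFDerivAt g g' (x + (0 : ℝ) • v) by simpa using hg).comp_hasDerivAt 0 hc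
  refine le_of_tendsto ((hq.tendsto _).comp (hasDerivAt_iff_tendsto_slope.mp hline)) ?_
  filter_upwards [self_mem_nhdsWithin] with t (ht : t ≠ 0)
  have hLt := hL (x + t • v)
  rw [add_sub_cancel_left, map_smul_eq_mul, Real.norm_eq_abs] at hLt
  calc q (slope (fun t : ℝ => g (x + t • v)) 0 t) = |t|⁻¹ * q (g (x + t • v) - g x) := by
        simp [slope_def_module, map_smul_eq_mul]
    _ ≤ |t|⁻¹ * (L * (|t| * p v)) := by gcongr
    _ = L * p v := by field_simp

theorem Module.End.abs_le_of_hasEigenvalue_of_seminorm_le {E : Type*} [AddCommGroup E]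
    [Module ℝ E] (p : Seminorm ℝ E) (hp : ∀ v, p v = 0 → v = 0) {T : Module.End ℝ E} {L : ℝ}
    (hT : ∀ v, p (T v) ≤ L * p v) {μ : ℝ} (hμ : T.HasEigenvalue μ) : |μ| ≤ L := by
  obtain ⟨v, hv⟩ := hμ.exists_hasEigenvector
  have hpv : 0 < p v := (apply_nonneg p v).lt_of_ne' fun h => hv.2 (hp v h)
  have hTv := hT v
  rw [hv.apply_eq_smul, map_smul_eq_mul, Real.norm_eq_abs] at hTv
  exact le_of_mul_le_mul_right hTv hpv

theorem ContinuousLinearMap.norm_le_of_forall_hasEigenvalue {E : Type*} [NormedAddCommGroup E]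
    [InnerProductSpace ℝ E] [FiniteDimensional ℝ E] {T : E →L[ℝ] E} (hT : T.IsSymmetric) {L : ℝ}
    (hL : 0 ≤ L) (h : ∀ μ, HasEigenvalue (T : Module.End ℝ E) μ → |μ| ≤ L) : ‖T‖ ≤ L := by
  have hnnnorm : ‖T‖₊ ≤ L.toNNReal := by
    rw [← ENNReal.coe_le_coe, ← T.spectralRadius_eq_nnnorm hT.isSelfAdjoint]
    refine iSup₂_le fun μ hμ => ENNReal.coe_le_coe.2 ?_
    rw [spectrum_eq, ← hasEigenvalue_iff_mem_spectrum] at hμ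
    rw [← NNReal.coe_le_coe, Real.coe_toNNReal _ hL, coe_nnnorm, Real.norm_eq_abs]
    exact h μ hμ
  simpa [← NNReal.coe_le_coe, Real.coe_toNNReal _ hL] using hnnnorm

theorem ContDiff.differentiable_fderiv {𝕜 E F : Type*} [NontriviallyNormedField 𝕜]
    [NormedAddCommGroup E] [NormedSpace 𝕜 E] [NormedAddCommGroup F] [NormedSpace 𝕜 F]
    {f : E → F} {n : WithTop ℕ∞} (hf : ContDiff 𝕜 n f) (hn : 2 ≤ n) :
    Differentiable 𝕜 (fderiv 𝕜 f) :=
  (hf.fderiv_right (m := 1) (by simpa [one_add_one_eq_two] using hn)).differentiable one_ne_zero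

section Gradient

variable {E : Type*} [NormedAddCommGroup E] [InnerProductSpace ℝ E] {f : E → ℝ}

theorem gradient_eq_sum_fderiv_smul [CompleteSpace E] {ι : Type*} [Fintype ι]
    (b : OrthonormalBasis ι ℝ E) (x : E) : ∇ f x = ∑ i, fderiv ℝ f x (b i) • b i := by
  conv_lhs => rw [← b.sum_repr' (∇ f x)]
  simp_rw [real_inner_comm, inner_gradient_left]

theorem ContDiff.differentiable_gradient [FiniteDimensional ℝ E] (hf : ContDiff ℝ 2 f) :
    Differentiable ℝ (∇ f) := by
  have hf' := hf.differentiable_fderiv le_rfl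
  rw [funext (gradient_eq_sum_fderiv_smul (stdOrthonormalBasis ℝ E))]
  fun_prop

theorem inner_fderiv_gradient [CompleteSpace E] {x : E}
    (hf : DifferentiableAt ℝ (fderiv ℝ f) x) (hg : DifferentiableAt ℝ (∇ f) x) (u w : E) :
    ⟪fderiv ℝ (∇ f) x u, w⟫ = fderiv ℝ (fderiv ℝ f) x u w := by
  have h₁ := (innerSL ℝ w).hasFDerivAt.comp x hg.hasFDerivAt
  have h₂ := (ContinuousLinearMap.apply ℝ ℝ w).hasFDerivAt.comp x hf.hasFDerivAt
  have hfun : innerSL ℝ w ∘ ∇ f = ContinuousLinearMap.apply ℝ ℝ w ∘ fderiv ℝ f := by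
    ext y
    simp
  rw [hfun] at h₁
  simpa [real_inner_comm w] using congrArg (· u) (h₁.unique h₂)

theorem ContDiff.isSymmetric_fderiv_gradient [FiniteDimensional ℝ E] (hf : ContDiff ℝ 2 f)
    (x : E) : (fderiv ℝ (∇ f) x).IsSymmetric := by
  intro u w
  have hf' := hf.differentiable_fderiv le_rfl x
  have hg := hf.differentiable_gradient x
  change ⟪fderiv ℝ (∇ f) x u, w⟫ = ⟪u, fderiv ℝ (∇ f) x w⟫
  rw [real_inner_comm _ u, inner_fderiv_gradient hf' hg, inner_fderiv_gradient hf' hg]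
  exact hf.contDiffAt.isSymmSndFDerivAt (by simp) u w

theorem ContDiff.norm_gradient_sub_le_of_seminorm [FiniteDimensional ℝ E] (hf : ContDiff ℝ 2 f)
    (p : Seminorm ℝ E) (hp : ∀ v, p v = 0 → v = 0) {L : ℝ}
    (hL : ∀ x y, p (∇ f x - ∇ f y) ≤ L * p (x - y)) (x y : E) :
    ‖∇ f x - ∇ f y‖ ≤ L * ‖x - y‖ := by
  obtain rfl | hxy := eq_or_ne x y
  · simp
  have hL₀ : 0 ≤ L := nonneg_of_mul_nonneg_left ((apply_nonneg p _).trans (hL x y))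
    ((apply_nonneg p _).lt_of_ne' fun h => hxy (sub_eq_zero.mp (hp _ h)))
  have hp_cont : Continuous p := p.convexOn.locallyLipschitz.continuous
  have hHess : ∀ z, ‖fderiv ℝ (∇ f) z‖ ≤ L := fun z =>
    ContinuousLinearMap.norm_le_of_forall_hasEigenvalue (hf.isSymmetric_fderiv_gradient z) hL₀
      fun _ => abs_le_of_hasEigenvalue_of_seminorm_le p hp
        ((hf.differentiable_gradient z).hasFDerivAt.seminorm_apply_le_of_lipschitz p hp_cont
          fun y => hL y z)
  exact convex_univ.norm_image_sub_le_of_norm_fderiv_le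
    (fun z _ => hf.differentiable_gradient z) (fun z _ => hHess z) trivial trivial

end Gradient

theorem EuclideanSpace.gradient_comp_ofLp_apply {ι : Type*} [Fintype ι] [DecidableEq ι]
    (V : (ι → ℝ) → ℝ) (w : EuclideanSpace ℝ ι) (i : ι) :
    ∇ (V ∘ WithLp.ofLp) w i = fderiv ℝ V (WithLp.ofLp w) (Pi.single i 1) := by
  calc ∇ (V ∘ WithLp.ofLp) w i = ⟪∇ (V ∘ WithLp.ofLp) w, EuclideanSpace.single i 1⟫ := by
        rw [EuclideanSpace.inner_single_right, one_mul, conj_trivial]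
    _ = fderiv ℝ V (WithLp.ofLp w) (Pi.single i 1) := by
        rw [inner_gradient_left, ← PiLp.coe_continuousLinearEquiv 2 ℝ,
          ContinuousLinearEquiv.comp_right_fderiv]
        rfl

/-- discussion after Lemma 1 of the paper. Let `V : ℝⁿ → ℝ` be twice
continuously differentiable, and let its gradient `g` (defined via the Fréchet derivative,
`g x i = (fderiv ℝ V x) (eᵢ)`) be Lipschitz with constant `L` with respect to an arbitrary
norm `ν` on `ℝⁿ` (given by its axioms). Then the gradient is Lipschitz with the same
constant `L` with respect to the Euclidean norm. -/
theorem gradient_euclidean_lipschitz_of_lipschitz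
    (n : ℕ) (V : (Fin n → ℝ) → ℝ) (hV : ContDiff ℝ 2 V)
    (g : (Fin n → ℝ) → (Fin n → ℝ))
    (hg : ∀ x i, g x i = fderiv ℝ V x (Pi.single i 1))
    (ν : (Fin n → ℝ) → ℝ)
    (hν0 : ∀ x, ν x = 0 ↔ x = 0)
    (hνhom : ∀ (c : ℝ) (x), ν (c • x) = |c| * ν x)
    (hνadd : ∀ x y, ν (x + y) ≤ ν x + ν y)
    (L : ℝ) (hL : ∀ x y, ν (g x - g y) ≤ L * ν (x - y)) :
    ∀ x y, Real.sqrt (∑ i, (g x i - g y i) ^ 2) ≤ L * Real.sqrt (∑ i, (x i - y i) ^ 2) := by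
  intro x y
  set F : EuclideanSpace ℝ (Fin n) → ℝ := V ∘ WithLp.ofLp
  have hF : ContDiff ℝ 2 F := hV.comp PiLp.contDiff_ofLp
  have hgradF : ∀ w, ∇ F w = WithLp.toLp 2 (g (WithLp.ofLp w)) := fun w => by
    ext i
    simp [F, EuclideanSpace.gradient_comp_ofLp_apply, hg]
  let p : Seminorm ℝ (EuclideanSpace ℝ (Fin n)) :=
    (Seminorm.of ν hνadd fun c x => by rw [hνhom, Real.norm_eq_abs]).comp
      (WithLp.linearEquiv 2 ℝ (Fin n → ℝ)).toLinearMap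
  have hp_apply : ∀ v, p v = ν (WithLp.ofLp v) := fun _ => rfl
  have hp : ∀ v, p v = 0 → v = 0 := fun v h => by
    simpa using (hν0 _).1 ((hp_apply v).symm.trans h)
  have hpL : ∀ a b, p (∇ F a - ∇ F b) ≤ L * p (a - b) := fun a b => by
    simpa [hp_apply, hgradF] using hL a b
  simpa [hgradF, EuclideanSpace.norm_eq] using
    hF.norm_gradient_sub_le_of_seminorm p hp hpL (WithLp.toLp 2 x) (WithLp.toLp 2 y)
end
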